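/- In a market with strong gross substitutes valuations, the componentwise minimal packing price vector exists and equals the minimal Walrasian price vector p*: every packing price vector q satisfies p* ≤ q componentwise. -/

import Mathlib

/-!
Let `x` be a Walrasian allocation at `p*` and `y` a packing allocation at `q`, and put
`r = p* ⊓ q`. The indirect utility `U` of an `M♮`-concave valuation is submodular in the prices:
its right derivative in the price of `e` is minus the least demanded quantity of `e`, which by
gross substitutes can only grow when other prices rise. Submodularity and the optimality of
`x i` at `p*` and of `y i` at `q` give, buyer by buyer,
`U(r) - u_r(x i) ≤ (p* - r)·(y i - x i)`. Summing, `∑ y i ≤ b = ∑ x i` makes the right side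
nonpositive, so every `x i` is still demanded at `r`: `r` is Walrasian, and `p* ≤ r ≤ q`.
-/

open Finset

variable {E : Type*} [Fintype E] [DecidableEq E]

/-- Characteristic (unit) vector of an item. -/
def chi (e : E) : E → ℤ := fun f => if f = e then 1 else 0

/-- The integer box `[0, b]_ℤ` of bundles. -/
def Box (b : E → ℤ) : Set (E → ℤ) := {z | ∀ e, 0 ≤ z e ∧ z e ≤ b e}

/-- Quasi-linear utility of a bundle at prices `p`. -/
noncomputable def util (v : (E → ℤ) → ℤ) (p : E → ℝ) (z : E → ℤ) : ℝ :=
  (v z : ℝ) - ∑ e : E, p e * (z e : ℝ)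

/-- Demand set: utility-maximizing bundles in the box. -/
def Demand (b : E → ℤ) (v : (E → ℤ) → ℤ) (p : E → ℝ) : Set (E → ℤ) :=
  {z | z ∈ Box b ∧ ∀ y ∈ Box b, util v p y ≤ util v p z}

/-- Componentwise minimal preferred bundles. -/
def MinDemand (b : E → ℤ) (v : (E → ℤ) → ℤ) (p : E → ℝ) : Set (E → ℤ) :=
  {z | z ∈ Demand b v p ∧ ∀ y ∈ Demand b v p, y ≤ z → y = z}

/-- Componentwise maximal preferred bundles. -/
def MaxDemand (b : E → ℤ) (v : (E → ℤ) → ℤ) (p : E → ℝ) : Set (E → ℤ) :=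
  {z | z ∈ Demand b v p ∧ ∀ y ∈ Demand b v p, z ≤ y → y = z}

/-- M♮-concavity, equivalent to the strong gross substitutes property. -/
def MNatConcave (b : E → ℤ) (v : (E → ℤ) → ℤ) : Prop :=
  ∀ x ∈ Box b, ∀ y ∈ Box b, ∀ e : E, y e < x e →
    v x + v y ≤ v (x - chi e) + v (y + chi e) ∨
    ∃ f : E, x f < y f ∧ v x + v y ≤ v (x - chi e + chi f) + v (y + chi e - chi f)

/-- M-convex set: exchange property. -/
def MConvex (B : Set (E → ℤ)) : Prop :=
  ∀ x ∈ B, ∀ y ∈ B, ∀ e : E, y e < x e →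
    ∃ f : E, x f < y f ∧ x - chi e + chi f ∈ B ∧ y + chi e - chi f ∈ B

/-- `ρ` is the rank function of `B`: `ρ S = max {z(S) : z ∈ B}`. -/
def IsRank (B : Set (E → ℤ)) (ρ : Finset E → ℤ) : Prop :=
  ∀ S : Finset E, IsGreatest ((fun z : E → ℤ => ∑ e ∈ S, z e) '' B) (ρ S)

/-- Prices `p` are packing: a choice of preferred bundles oversells no item. -/
def Packing {N : Type*} [Fintype N] (b : E → ℤ) (v : N → (E → ℤ) → ℤ) (p : E → ℝ) : Prop :=
  ∃ z : N → E → ℤ, (∀ i, z i ∈ Demand b (v i) p) ∧ ∀ e, ∑ i, z i e ≤ b e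

/-- Prices `p` are covering: a choice of preferred bundles sells all items. -/
def Covering {N : Type*} [Fintype N] (b : E → ℤ) (v : N → (E → ℤ) → ℤ) (p : E → ℝ) : Prop :=
  ∃ z : N → E → ℤ, (∀ i, z i ∈ Demand b (v i) p) ∧ ∀ e, b e ≤ ∑ i, z i e

/-- Prices `p` are Walrasian: a choice of preferred bundles exactly exhausts the supply. -/
def Walrasian {N : Type*} [Fintype N] (b : E → ℤ) (v : N → (E → ℤ) → ℤ) (p : E → ℝ) : Prop :=
  ∃ z : N → E → ℤ, (∀ i, z i ∈ Demand b (v i) p) ∧ ∀ e, ∑ i, z i e = b e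

open Filter Topology
set_option linter.unusedSectionVars false

lemma apply_add_le_of_forall_add_single_le {ι M β : Type*} [Fintype ι] [DecidableEq ι]
    [AddCommMonoid M] [Preorder β] {H : (ι → M) → β} {d : ι → M}
    (h : ∀ x i, H (x + Pi.single i (d i)) ≤ H x) (x : ι → M) : H (x + d) ≤ H x := by
  rw [← Finset.univ_sum_single d]
  induction (Finset.univ : Finset ι) using Finset.induction_on with
  | empty => simp
  | insert i s hi ih =>
    rw [Finset.sum_insert hi, add_left_comm, add_comm]
    exact (h _ i).trans ih

lemma add_sub_inf_eq_sup {α : Type*} [Lattice α] [AddCommGroup α] [AddLeftMono α] (a b : α) :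
    a + (b - a ⊓ b) = a ⊔ b := by
  rw [add_sub, ← inf_add_sup a b, add_sub_cancel_left]

noncomputable def payment (p : E → ℝ) (z : E → ℤ) : ℝ := ∑ e, p e * z e

section Payment

variable {p d : E → ℝ} {z w : E → ℤ}

lemma util_eq_sub_payment (v : (E → ℤ) → ℤ) : util v p z = v z - payment p z := rfl

lemma payment_add_left : payment (p + d) z = payment p z + payment d z := by
  simp only [payment, Pi.add_apply, add_mul, Finset.sum_add_distrib]

lemma payment_add : payment p (z + w) = payment p z + payment p w := by
  simp only [payment, Pi.add_apply, Int.cast_add, mul_add, Finset.sum_add_distrib]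

lemma payment_sub : payment p (z - w) = payment p z - payment p w := by
  simp only [payment, Pi.sub_apply, Int.cast_sub, mul_sub, Finset.sum_sub_distrib]

lemma payment_chi (e : E) : payment p (chi e) = p e := by
  simp [payment, chi]

lemma payment_single (e : E) (t : ℝ) : payment (Pi.single e t) z = t * z e := by
  simp [payment, Pi.single_apply]

lemma payment_sum {N : Type*} [Fintype N] (y : N → E → ℤ) :
    payment p (∑ i, y i) = ∑ i, payment p (y i) := by
  simp only [payment, Finset.sum_apply, Int.cast_sum, Finset.mul_sum]
  exact Finset.sum_comm

lemma payment_mono (hd : 0 ≤ d) (hzw : z ≤ w) : payment d z ≤ payment d w :=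
  Finset.sum_le_sum fun e _ => mul_le_mul_of_nonneg_left (by exact_mod_cast hzw e) (hd e)

lemma util_add_single (v : (E → ℤ) → ℤ) (e : E) (t : ℝ) :
    util v (p + Pi.single e t) z = util v p z - t * z e := by
  rw [util_eq_sub_payment, util_eq_sub_payment, payment_add_left, payment_single]; ring

end Payment

noncomputable def boxFinset (b : E → ℤ) : Finset (E → ℤ) :=
  Fintype.piFinset fun e => Finset.Icc 0 (b e)

section Demand

variable {b : E → ℤ} {v : (E → ℤ) → ℤ} {p : E → ℝ} {z : E → ℤ}

lemma mem_boxFinset : z ∈ boxFinset b ↔ z ∈ Box b := by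
  simp [boxFinset, Box]

lemma boxFinset_nonempty (hb : 0 ≤ b) : (boxFinset b).Nonempty :=
  ⟨0, mem_boxFinset.2 fun e => ⟨le_rfl, hb e⟩⟩

lemma demand_finite : (Demand b v p).Finite :=
  (boxFinset b).finite_toSet.subset fun _ hz => mem_boxFinset.2 hz.1

noncomputable def indirectUtility (hb : 0 ≤ b) (v : (E → ℤ) → ℤ) (p : E → ℝ) : ℝ :=
  (boxFinset b).sup' (boxFinset_nonempty hb) (util v p)

lemma util_le_indirectUtility (hb : 0 ≤ b) (hz : z ∈ Box b) :
    util v p z ≤ indirectUtility hb v p :=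
  Finset.le_sup' _ (mem_boxFinset.2 hz)

lemma mem_demand_iff (hb : 0 ≤ b) :
    z ∈ Demand b v p ↔ z ∈ Box b ∧ util v p z = indirectUtility hb v p := by
  refine ⟨fun hz => ⟨hz.1, le_antisymm (util_le_indirectUtility hb hz.1) ?_⟩,
    fun ⟨hz, h⟩ => ⟨hz, fun y hy => h ▸ util_le_indirectUtility hb hy⟩⟩
  exact Finset.sup'_le _ _ fun y hy => hz.2 y (mem_boxFinset.1 hy)

lemma demand_nonempty (hb : 0 ≤ b) : (Demand b v p).Nonempty := by
  obtain ⟨z, hz, hzU⟩ := Finset.exists_mem_eq_sup' (boxFinset_nonempty hb) (util v p)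
  exact ⟨z, (mem_demand_iff hb).2 ⟨mem_boxFinset.1 hz, hzU.symm⟩⟩

lemma continuous_indirectUtility (hb : 0 ≤ b) : Continuous (indirectUtility hb v) :=
  Continuous.finset_sup'_apply _ fun z _ => by unfold util; fun_prop

end Demand

section GrossSubstitutes

variable {b : E → ℤ} {v : (E → ℤ) → ℤ}

lemma mem_demand_of_exchange {p p' : E → ℝ} {x y x' y' : E → ℤ}
    (hx : x ∈ Demand b v p) (hy : y ∈ Demand b v p') (hx' : x' ∈ Box b) (hy' : y' ∈ Box b)
    (hval : v x + v y ≤ v x' + v y')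
    (hpay : payment p x' + payment p' y' ≤ payment p x + payment p' y) :
    x' ∈ Demand b v p := by
  refine ⟨hx', fun w hw => (hx.2 w hw).trans ?_⟩
  have hy'_le := hy.2 y' hy'
  have hval' : (v x + v y : ℝ) ≤ v x' + v y' := by exact_mod_cast hval
  simp only [util_eq_sub_payment] at hy'_le ⊢
  linarith

theorem exists_mem_demand_le_of_le (hb : 0 ≤ b) (hv : MNatConcave b v) {p p' : E → ℝ}
    (hpp' : p ≤ p') {z : E → ℤ} (hz : z ∈ Demand b v p') :
    ∃ y ∈ Demand b v p, ∀ g, p g = p' g → y g ≤ z g := by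
  classical
  -- Among bundles demanded at `p` take one, `y`, of least excess over `z` on the items of
  -- unchanged price. An `M♮` exchange at an item of excess moves `y` one unit towards `z`,
  -- keeps both bundles optimal, and lowers the excess.
  let excess : (E → ℤ) → ℕ := fun y => ∑ g with p g = p' g, (y g - z g).toNat
  obtain ⟨y, hy, hmin⟩ :=
    Set.exists_min_image _ excess demand_finite (demand_nonempty hb (v := v) (p := p))
  refine ⟨y, hy, fun g hg => not_lt.1 fun hzy => ?_⟩
  have hyB := hy.1
  have hzB := hz.1
  have descent : ∀ y' z', y' ∈ Box b → z' ∈ Box b → v y + v z ≤ v y' + v z' →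
      payment p y' + payment p' z' ≤ payment p y + payment p' z →
      (∀ k, (y' k - z k).toNat ≤ (y k - z k).toNat) →
      (y' g - z g).toNat < (y g - z g).toNat → False := fun y' z' hy' hz' hval hpay hle hlt =>
    (hmin y' (mem_demand_of_exchange hy hz hy' hz' hval hpay)).not_gt <|
      Finset.sum_lt_sum (fun k _ => hle k) ⟨g, by simpa using hg, hlt⟩
  have hyg := hyB g
  have hzg := hzB g
  rcases hv y hyB z hzB g hzy with hval | ⟨h, hyzh, hval⟩
  · refine descent (y - chi g) (z + chi g) ?_ ?_ hval ?_ ?_ ?_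
    · intro k; have := hyB k; have := hzB k
      simp only [Pi.sub_apply, chi]; split_ifs <;> subst_vars <;> omega
    · intro k; have := hyB k; have := hzB k
      simp only [Pi.add_apply, chi]; split_ifs <;> subst_vars <;> omega
    · rw [payment_sub, payment_add, payment_chi, payment_chi, hg]; linarith
    · intro k; simp only [Pi.sub_apply, chi]; split_ifs <;> omega
    · simp [chi]; omega
  · have hgh : h ≠ g := by rintro rfl; omega
    have hyh := hyB h
    have hzh := hzB h
    refine descent (y - chi g + chi h) (z + chi g - chi h) ?_ ?_ hval ?_ ?_ ?_
    · intro k; have := hyB k; have := hzB k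
      simp only [Pi.add_apply, Pi.sub_apply, chi]; split_ifs <;> subst_vars <;> omega
    · intro k; have := hyB k; have := hzB k
      simp only [Pi.add_apply, Pi.sub_apply, chi]; split_ifs <;> subst_vars <;> omega
    · simp only [payment_sub, payment_add, payment_chi, hg]; linarith [hpp' h]
    · intro k; simp only [Pi.add_apply, Pi.sub_apply, chi]; split_ifs <;> subst_vars <;> omega
    · simp [chi, hgh.symm]; omega

lemma hasDerivWithinAt_indirectUtility_single (hb : 0 ≤ b) (P : E → ℝ) (e : E) (t : ℝ)
    {z : E → ℤ} (hz : z ∈ Demand b v (P + Pi.single e t))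
    (hmin : ∀ y ∈ Demand b v (P + Pi.single e t), z e ≤ y e) :
    HasDerivWithinAt (fun s => indirectUtility hb v (P + Pi.single e s)) (-(z e : ℝ))
      (Set.Ici t) t := by
  set U := indirectUtility hb v (P + Pi.single e t)
  have hshift : ∀ s w,
      util v (P + Pi.single e s) w = util v (P + Pi.single e t) w - (s - t) * w e := by
    intro s w
    rw [util_add_single, util_add_single]; ring
  -- A bundle demanded at `t` contains at least `z e` units of `e`; any other bundle has a
  -- positive utility gap at `t`, which persists for `s` close to `t`.
  have hupper : ∀ w ∈ boxFinset b,
      ∀ᶠ s in 𝓝[≥] t, util v (P + Pi.single e s) w ≤ U - (s - t) * z e := by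
    intro w hw
    rw [mem_boxFinset] at hw
    by_cases hwD : w ∈ Demand b v (P + Pi.single e t)
    · filter_upwards [self_mem_nhdsWithin] with s hs
      have : (z e : ℝ) ≤ w e := by exact_mod_cast hmin w hwD
      rw [hshift, ((mem_demand_iff hb).1 hwD).2]
      nlinarith [Set.mem_Ici.1 hs]
    · have hgap : util v (P + Pi.single e t) w < U :=
        (util_le_indirectUtility hb hw).lt_of_ne fun h => hwD ((mem_demand_iff hb).2 ⟨hw, h⟩)
      have hlim : Tendsto (fun s => (s - t) * ((z e : ℝ) - w e)) (𝓝[≥] t) (𝓝 0) :=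
        (((continuous_sub_right t).mul continuous_const).tendsto' t 0 (by simp)).mono_left
          nhdsWithin_le_nhds
      filter_upwards [hlim.eventually_lt_const (sub_pos.2 hgap)] with s hs
      rw [hshift]; linarith
  have heq : (fun s => indirectUtility hb v (P + Pi.single e s))
      =ᶠ[𝓝[≥] t] fun s => U - (s - t) * z e := by
    filter_upwards [(Filter.eventually_all_finset _).2 hupper] with s hs
    refine le_antisymm (Finset.sup'_le _ _ hs) ?_
    calc U - (s - t) * z e = util v (P + Pi.single e s) z := by
          rw [hshift, ((mem_demand_iff hb).1 hz).2]
      _ ≤ _ := util_le_indirectUtility hb hz.1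
  have hlin : HasDerivWithinAt (fun s => U - (s - t) * z e) (-(z e : ℝ)) (Set.Ici t) t := by
    simpa using
      ((((hasDerivAt_id t).sub_const t).mul_const (z e : ℝ)).const_sub U).hasDerivWithinAt
  exact hlin.congr_of_eventuallyEq heq (by simp [U])

lemma exists_mem_demand_forall_apply_le (hb : 0 ≤ b) (p : E → ℝ) (e : E) :
    ∃ z ∈ Demand b v p, ∀ y ∈ Demand b v p, z e ≤ y e :=
  Set.exists_min_image _ (· e) demand_finite (demand_nonempty hb)

lemma indirectUtility_add_single_sub_le (hb : 0 ≤ b) (hv : MNatConcave b v) {P P' : E → ℝ}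
    (hPP' : P ≤ P') {e : E} (he : P e = P' e) {δ : ℝ} (hδ : 0 ≤ δ) :
    indirectUtility hb v (P' + Pi.single e δ) - indirectUtility hb v (P + Pi.single e δ)
      ≤ indirectUtility hb v P' - indirectUtility hb v P := by
  choose z hzD hzmin using
    fun t => exists_mem_demand_forall_apply_le hb (v := v) (P + Pi.single e t) e
  choose z' hz'D hz'min using
    fun t => exists_mem_demand_forall_apply_le hb (v := v) (P' + Pi.single e t) e
  have hcont : ∀ Q, Continuous fun s => indirectUtility hb v (Q + Pi.single e s) := fun Q =>
    (continuous_indirectUtility hb).comp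
      (continuous_const.add (continuous_single (A := fun _ : E => ℝ) e))
  set F := fun s =>
    indirectUtility hb v (P' + Pi.single e s) - indirectUtility hb v (P + Pi.single e s)
  have hderiv : ∀ t, HasDerivWithinAt F (-(z' t e : ℝ) - -(z t e : ℝ)) (Set.Ici t) t :=
    fun t => (hasDerivWithinAt_indirectUtility_single hb P' e t (hz'D t) (hz'min t)).sub
      (hasDerivWithinAt_indirectUtility_single hb P e t (hzD t) (hzmin t))
  -- `F` has right derivative `z t e - z' t e` at `t`, nonpositive by gross substitutes.
  have hslope : ∀ t, (z t e : ℝ) ≤ z' t e := by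
    intro t
    obtain ⟨y, hyD, hyz'⟩ := exists_mem_demand_le_of_le hb hv (add_le_add_left hPP' _) (hz'D t)
    exact_mod_cast (hzmin t y hyD).trans (hyz' e (by simp [he]))
  have := image_le_of_deriv_right_le_deriv_boundary (B := fun _ => F 0) (B' := fun _ => 0)
    ((hcont P').sub (hcont P)).continuousOn (fun t _ => hderiv t) le_rfl continuousOn_const
    (fun t _ => hasDerivWithinAt_const _ _ _) (fun t _ => by linarith [hslope t])
    (Set.right_mem_Icc.2 hδ)
  simpa [F] using this

theorem indirectUtility_inf_add_sup_le (hb : 0 ≤ b) (hv : MNatConcave b v) (p q : E → ℝ) :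
    indirectUtility hb v (p ⊓ q) + indirectUtility hb v (p ⊔ q)
      ≤ indirectUtility hb v p + indirectUtility hb v q := by
  set d := p - p ⊓ q
  set d' := q - p ⊓ q
  have hd : 0 ≤ d := sub_nonneg.2 inf_le_left
  have hd' : 0 ≤ d' := sub_nonneg.2 inf_le_right
  have key := apply_add_le_of_forall_add_single_le
    (H := fun x => indirectUtility hb v (x + d') - indirectUtility hb v x) (d := d) ?_ (p ⊓ q)
  · rw [add_sub_cancel, add_sub_cancel, add_sub_inf_eq_sup] at key
    linarith
  · intro x i
    by_cases hdi : d i = 0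
    · simp [hdi]
    · have hd'i : d' i = 0 := by
        simp only [d, d', Pi.sub_apply, Pi.inf_apply] at hdi ⊢
        rcases le_total (p i) (q i) with h | h <;> simp_all
      have := indirectUtility_add_single_sub_le hb hv (le_add_of_nonneg_right (a := x) hd')
        (e := i) (by simp [hd'i]) (hd i)
      simpa only [add_right_comm x d'] using this

lemma indirectUtility_inf_sub_util_le (hb : 0 ≤ b) (hv : MNatConcave b v) {p q : E → ℝ}
    {x y : E → ℤ} (hx : x ∈ Demand b v p) (hy : y ∈ Demand b v q) :
    indirectUtility hb v (p ⊓ q) - util v (p ⊓ q) x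
      ≤ payment (p - p ⊓ q) y - payment (p - p ⊓ q) x := by
  have hsub := indirectUtility_inf_add_sup_le hb hv p q
  have hxU : util v p x = indirectUtility hb v p := ((mem_demand_iff hb).1 hx).2
  have hyU : util v q y = indirectUtility hb v q := ((mem_demand_iff hb).1 hy).2
  have hyle := util_le_indirectUtility hb hy.1 (v := v) (p := p ⊔ q)
  have hsup : q + (p - p ⊓ q) = p ⊔ q := by rw [sup_comm, inf_comm, add_sub_inf_eq_sup]
  rw [← hsup] at hsub hyle
  nth_rw 1 [← add_sub_cancel (p ⊓ q) p] at hxU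
  simp only [util_eq_sub_payment, payment_add_left] at hxU hyU hyle ⊢
  linarith

end GrossSubstitutes

theorem Walrasian.inf_of_packing {N : Type*} [Fintype N] {b : E → ℤ} {v : N → (E → ℤ) → ℤ}
    (hb : 0 ≤ b) (hv : ∀ i, MNatConcave b (v i)) {p q : E → ℝ} (hp : Walrasian b v p)
    (hq : Packing b v q) :
    Walrasian b v (p ⊓ q) := by
  obtain ⟨x, hxD, hxb⟩ := hp
  obtain ⟨y, hyD, hyb⟩ := hq
  set d := p - p ⊓ q
  have hgap : ∀ i ∈ Finset.univ,
      0 ≤ indirectUtility hb (v i) (p ⊓ q) - util (v i) (p ⊓ q) (x i) :=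
    fun i _ => sub_nonneg.2 (util_le_indirectUtility hb (hxD i).1)
  have hsum : ∑ i, (indirectUtility hb (v i) (p ⊓ q) - util (v i) (p ⊓ q) (x i)) ≤ 0 :=
    calc _ ≤ ∑ i, (payment d (y i) - payment d (x i)) :=
          Finset.sum_le_sum fun i _ => indirectUtility_inf_sub_util_le hb (hv i) (hxD i) (hyD i)
      _ = payment d (∑ i, y i) - payment d (∑ i, x i) := by
          rw [Finset.sum_sub_distrib, payment_sum, payment_sum]
      _ ≤ payment d b - payment d b := by
          refine sub_le_sub (payment_mono (sub_nonneg.2 inf_le_left) fun e => ?_) (le_of_eq ?_)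
          · simpa only [Finset.sum_apply] using hyb e
          · congr 1; ext e; simpa only [Finset.sum_apply] using (hxb e).symm
      _ = 0 := sub_self _
  have hzero :=
    (Finset.sum_eq_zero_iff_of_nonneg hgap).1 (le_antisymm hsum (Finset.sum_nonneg hgap))
  exact ⟨x, fun i => (mem_demand_iff hb).2
    ⟨(hxD i).1, (sub_eq_zero.1 (hzero i (Finset.mem_univ i))).symm⟩, hxb⟩

theorem stmt16_general {N : Type*} [Fintype N] (b : E → ℤ) (hb : 0 ≤ b)
    (v : N → (E → ℤ) → ℤ) (hsgs : ∀ i, MNatConcave b (v i))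
    (pstar : E → ℝ) (hps : 0 ≤ pstar)
    (hW : Walrasian b v pstar)
    (hmin : ∀ p : E → ℝ, 0 ≤ p → Walrasian b v p → pstar ≤ p)
    (q : E → ℝ) (hq : 0 ≤ q) (hpack : Packing b v q) :
    pstar ≤ q :=
  (hmin _ (le_inf hps hq) (hW.inf_of_packing hb hsgs hpack)).trans inf_le_right

/-- The componentwise minimal packing price vector equals the minimal Walrasian
price vector: every packing price vector dominates `p*` componentwise. -/
theorem stmt16 {N : Type*} [Fintype N] (b : E → ℤ) (hb : 0 ≤ b)
    (v : N → (E → ℤ) → ℤ) (hsgs : ∀ i, MNatConcave b (v i))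
    (hmono : ∀ i, ∀ x ∈ Box b, ∀ y ∈ Box b, x ≤ y → v i x ≤ v i y)
    (pstar : E → ℝ) (hps : 0 ≤ pstar)
    (hW : Walrasian b v pstar)
    (hmin : ∀ p : E → ℝ, 0 ≤ p → Walrasian b v p → pstar ≤ p)
    (q : E → ℝ) (hq : 0 ≤ q) (hpack : Packing b v q) :
    pstar ≤ q :=
  stmt16_general b hb v hsgs pstar hps hW hmin q hq hpack
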